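/- arXiv:1303.6268 — 3 statements merged into one kernel-verified Lean document; each statement's English description precedes it below -/
import Mathlib

section
/- Existence of standard form (Lemma 3.5): for every k ≥ 1, every sequence of indices i_1,…,i_{k+1} ∈ ι with 1 ≤ A i_t i_{t+1} for all 1 ≤ t ≤ k, and every sequence n_1,…,n_k ∈ ℤ, there exist integers m_1,…,m_k with 1 ≤ m_t ≤ A i_t i_{t+1} for all 1 ≤ t ≤ k−1 such that the words g(i_1,i_2,n_1)g(i_2,i_3,n_2)⋯g(i_k,i_{k+1},n_k) and g(i_1,i_2,m_1)g(i_2,i_3,m_2)⋯g(i_k,i_{k+1},m_k) have the same class in M; that is, every word in the letters g is congruent to a word in standard form with the same index sequence. -/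
/-- The alphabet of generators for the semigroupoid `Λ_{A,B}`: a zero letter `z`,
letters `h i` for `i : ι`, and letters `g i j _ n` for pairs with `1 ≤ A i j` and `n : ℤ`. -/
inductive Letter (ι : Type) (A : ι → ι → ℕ) : Type where
  | z : Letter ι A
  | h : ι → Letter ι A
  | g : (i j : ι) → 1 ≤ A i j → ℤ → Letter ι A

/-- The defining relations of `Λ_{A,B}` (as a monoid congruence generator) on the free
monoid over `Letter ι A`. -/
inductive KatRel (ι : Type) (A : ι → ι → ℕ) (B : ι → ι → ℤ) :
    FreeMonoid (Letter ι A) → FreeMonoid (Letter ι A) → Prop where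
  | zl (w : Letter ι A) :
      KatRel ι A B (FreeMonoid.of Letter.z * FreeMonoid.of w) (FreeMonoid.of Letter.z)
  | zr (w : Letter ι A) :
      KatRel ι A B (FreeMonoid.of w * FreeMonoid.of Letter.z) (FreeMonoid.of Letter.z)
  | gh (i j : ι) (hij : 1 ≤ A i j) (n : ℤ) :
      KatRel ι A B (FreeMonoid.of (Letter.g i j hij n) * FreeMonoid.of (Letter.h j))
        (FreeMonoid.of (Letter.g i j hij (n + A i j)))
  | hg (i j : ι) (hij : 1 ≤ A i j) (n : ℤ) :
      KatRel ι A B (FreeMonoid.of (Letter.h i) * FreeMonoid.of (Letter.g i j hij n))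
        (FreeMonoid.of (Letter.g i j hij (n + B i j)))
  | hh (i j : ι) (hne : i ≠ j) :
      KatRel ι A B (FreeMonoid.of (Letter.h i) * FreeMonoid.of (Letter.h j))
        (FreeMonoid.of Letter.z)
  | hg' (i i' j : ι) (hij : 1 ≤ A i' j) (n : ℤ) (hne : i ≠ i') :
      KatRel ι A B (FreeMonoid.of (Letter.h i) * FreeMonoid.of (Letter.g i' j hij n))
        (FreeMonoid.of Letter.z)
  | gh' (i j k : ι) (hij : 1 ≤ A i j) (n : ℤ) (hne : j ≠ k) :
      KatRel ι A B (FreeMonoid.of (Letter.g i j hij n) * FreeMonoid.of (Letter.h k))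
        (FreeMonoid.of Letter.z)
  | gg (i j j' l : ι) (hij : 1 ≤ A i j) (hjl : 1 ≤ A j' l) (n m : ℤ) (hne : j ≠ j') :
      KatRel ι A B (FreeMonoid.of (Letter.g i j hij n) * FreeMonoid.of (Letter.g j' l hjl m))
        (FreeMonoid.of Letter.z)

/-- The congruence generated by the defining relations. -/
def KatCon (ι : Type) (A : ι → ι → ℕ) (B : ι → ι → ℤ) : Con (FreeMonoid (Letter ι A)) :=
  conGen (KatRel ι A B)

/-- The quotient monoid `M`. -/
abbrev KatM (ι : Type) (A : ι → ι → ℕ) (B : ι → ι → ℤ) : Type :=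
  (KatCon ι A B).Quotient

/-- The quotient map `F → M`. -/
def KatQ (ι : Type) (A : ι → ι → ℕ) (B : ι → ι → ℤ) :
    FreeMonoid (Letter ι A) →* KatM ι A B :=
  (KatCon ι A B).mk'

/-- The zero element of `M`: the class of the letter `z`. -/
def zeroM (ι : Type) (A : ι → ι → ℕ) (B : ι → ι → ℤ) : KatM ι A B :=
  KatQ ι A B (FreeMonoid.of Letter.z)

/-- The word `g(i₁,i₂,n₁)·g(i₂,i₃,n₂)⋯g(i_k,i_{k+1},n_k)` in the free monoid. -/
def gwordF (ι : Type) (A : ι → ι → ℕ) (k : ℕ) (i : Fin (k + 1) → ι)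
    (hA : ∀ t : Fin k, 1 ≤ A (i t.castSucc) (i t.succ)) (n : Fin k → ℤ) :
    FreeMonoid (Letter ι A) :=
  (List.ofFn fun t : Fin k =>
    FreeMonoid.of (Letter.g (i t.castSucc) (i t.succ) (hA t) (n t))).prod

section Aux
variable {ι : Type} {A : ι → ι → ℕ} {B : ι → ι → ℤ}

lemma shift1 (i j l : ι) (hij : 1 ≤ A i j) (hjl : 1 ≤ A j l) (n m : ℤ) :
    KatCon ι A B
      (FreeMonoid.of (Letter.g i j hij n) * FreeMonoid.of (Letter.g j l hjl m))
      (FreeMonoid.of (Letter.g i j hij (n - A i j)) *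
        FreeMonoid.of (Letter.g j l hjl (m + B j l))) := by
  have h1 : KatCon ι A B
      (FreeMonoid.of (Letter.g i j hij (n - A i j)) * FreeMonoid.of (Letter.h j))
      (FreeMonoid.of (Letter.g i j hij n)) := by
    have := ConGen.Rel.of _ _ (KatRel.gh (ι := ι) (A := A) (B := B) i j hij (n - A i j))
    simp at this; exact this
  have h2 : KatCon ι A B
      (FreeMonoid.of (Letter.h j) * FreeMonoid.of (Letter.g j l hjl m))
      (FreeMonoid.of (Letter.g j l hjl (m + B j l))) :=
    ConGen.Rel.of _ _ (KatRel.hg j l hjl m)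
  have h3 := (KatCon ι A B).mul h1.symm ((KatCon ι A B).refl (FreeMonoid.of (Letter.g j l hjl m)))
  have h4 := (KatCon ι A B).mul ((KatCon ι A B).refl (FreeMonoid.of (Letter.g i j hij (n - A i j)))) h2
  exact h3.trans (by rw [mul_assoc]; exact h4)


lemma shiftZ (i j l : ι) (hij : 1 ≤ A i j) (hjl : 1 ≤ A j l) (n m q : ℤ) :
    KatCon ι A B
      (FreeMonoid.of (Letter.g i j hij n) * FreeMonoid.of (Letter.g j l hjl m))
      (FreeMonoid.of (Letter.g i j hij (n - q * A i j)) *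
        FreeMonoid.of (Letter.g j l hjl (m + q * B j l))) := by
  induction q using Int.induction_on with
  | zero => simpa using (KatCon ι A B).refl _
  | succ p ih =>
      have := ih.trans (shift1 (B := B) i j l hij hjl (n - p * A i j) (m + p * B j l))
      have e1 : n - (p:ℤ) * A i j - A i j = n - ((p:ℤ) + 1) * A i j := by ring
      have e2 : m + (p:ℤ) * B j l + B j l = m + ((p:ℤ) + 1) * B j l := by ring
      rw [e1, e2] at this
      exact_mod_cast this
  | pred p ih =>
      have h1 := shift1 (B := B) i j l hij hjl (n - (-(p:ℤ) - 1) * A i j)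
        (m + (-(p:ℤ) - 1) * B j l)
      have e1 : n - (-(p:ℤ) - 1) * A i j - A i j = n - (-(p:ℤ)) * A i j := by ring
      have e2 : m + (-(p:ℤ) - 1) * B j l + B j l = m + (-(p:ℤ)) * B j l := by ring
      rw [e1, e2] at h1
      exact ih.trans h1.symm

lemma gwordF_succ (k : ℕ) (i : Fin (k + 2) → ι)
    (hA : ∀ t : Fin (k + 1), 1 ≤ A (i t.castSucc) (i t.succ)) (n : Fin (k + 1) → ℤ) :
    gwordF ι A (k + 1) i hA n =
      FreeMonoid.of (Letter.g (i 0) (i 1) (hA 0) (n 0)) *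
        gwordF ι A k (i ∘ Fin.succ)
          (fun t => by simpa [Fin.castSucc_succ] using hA t.succ) (n ∘ Fin.succ) := by
  simp only [gwordF, List.ofFn_succ, List.prod_cons]
  rfl


lemma of_g_eq {a b c d : ι} (hac : a = c) (hbd : b = d) (p : 1 ≤ A a b) (p' : 1 ≤ A c d)
    (v : ℤ) :
    FreeMonoid.of (Letter.g (A := A) a b p v) = FreeMonoid.of (Letter.g c d p' v) := by
  subst hac; subst hbd; rfl

lemma katQ_eq_of_con {x y : FreeMonoid (Letter ι A)} (h : KatCon ι A B x y) :
    KatQ ι A B x = KatQ ι A B y := by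
  simpa [KatQ, Con.eq] using h

lemma aux_standard (B : ι → ι → ℤ) :
    ∀ (k : ℕ) (i : Fin (k + 2) → ι)
      (hA : ∀ t : Fin (k + 1), 1 ≤ A (i t.castSucc) (i t.succ)) (n : Fin (k + 1) → ℤ),
    ∃ m : Fin (k + 1) → ℤ,
      (∀ t : Fin (k + 1), (t : ℕ) + 1 < k + 1 →
        1 ≤ m t ∧ m t ≤ (A (i t.castSucc) (i t.succ) : ℤ)) ∧
      KatQ ι A B (gwordF ι A (k + 1) i hA n) = KatQ ι A B (gwordF ι A (k + 1) i hA m) := by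
  intro k
  induction k with
  | zero =>
      intro i hA n
      exact ⟨n, fun t ht => absurd ht (by omega), rfl⟩
  | succ k ih =>
      intro i hA n
      -- head pair
      set a : ℤ := (A (i 0) (i 1) : ℤ) with ha
      have hapos : 0 < a := by
        have := hA 0
        simp only [ha]
        exact_mod_cast this
      set q : ℤ := (n 0 - 1) / a with hq
      set m0 : ℤ := n 0 - q * a with hm0
      have hm0b : 1 ≤ m0 ∧ m0 ≤ a := by
        have h1 : 0 ≤ (n 0 - 1) % a := Int.emod_nonneg _ (by omega)
        have h2 : (n 0 - 1) % a < a := Int.emod_lt_of_pos _ hapos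
        have h3 : (n 0 - 1) % a = n 0 - 1 - q * a := by
          rw [hq, Int.emod_def]; ring
        constructor <;> omega
      -- tail data
      set i' : Fin (k + 2) → ι := i ∘ Fin.succ with hi'
      have hA' : ∀ t : Fin (k + 1), 1 ≤ A (i' t.castSucc) (i' t.succ) := fun t => by
        simpa [hi', Fin.castSucc_succ] using hA t.succ
      set n' : Fin (k + 1) → ℤ :=
        Function.update (n ∘ Fin.succ) 0 (n 1 + q * B (i 1) (i 2)) with hn'
      obtain ⟨m', hm'b, hm'eq⟩ := ih i' hA' n'
      refine ⟨Fin.cons m0 m', ?_, ?_⟩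
      · intro t
        refine Fin.cases ?_ (fun s => ?_) t
        · intro _; simpa using hm0b
        · intro hs
          have hs' : (s : ℕ) + 1 < k + 1 := by
            simpa [Fin.val_succ] using hs
          have := hm'b s hs'
          simpa [hi', Fin.castSucc_succ] using this
      · have hA2 : (1 : ℕ) ≤ A (i 1) (i 2) := by simpa using hA 1
        have key : KatQ ι A B
            (FreeMonoid.of (Letter.g (i 0) (i 1) (hA 0) (n 0)) *
              FreeMonoid.of (Letter.g (i 1) (i 2) hA2 (n 1))) =
            KatQ ι A B
            (FreeMonoid.of (Letter.g (i 0) (i 1) (hA 0) m0) *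
              FreeMonoid.of (Letter.g (i 1) (i 2) hA2
                (n 1 + q * B (i 1) (i 2)))) :=
          katQ_eq_of_con (shiftZ (i 0) (i 1) (i 2) (hA 0) hA2 (n 0) (n 1) q)
        have hcons : Fin.cons m0 m' ∘ Fin.succ = m' := funext fun t => by simp
        have hi0 : i' 0 = i 1 := by simp [hi']
        have hi1 : i' 1 = i 2 := by
          show i (Fin.succ 1) = i 2
          rw [Fin.succ_one_eq_two]
        have hupd : n' ∘ Fin.succ = (n ∘ Fin.succ) ∘ Fin.succ := funext fun t => by
          simp [hn', Function.update_of_ne (Fin.succ_ne_zero t)]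
        have hn0 : n' 0 = n 1 + q * B (i 1) (i 2) := by
          rw [hn']; exact Function.update_self _ _ _
        set rest : FreeMonoid (Letter ι A) := gwordF ι A k ((i ∘ Fin.succ) ∘ Fin.succ)
          (fun t => by simpa [Fin.castSucc_succ] using hA t.succ.succ)
          ((n ∘ Fin.succ) ∘ Fin.succ) with hrest
        have eqn' : KatQ ι A B (gwordF ι A (k + 1) i' hA' n') =
            KatQ ι A B (FreeMonoid.of (Letter.g (i 1) (i 2) hA2
              (n 1 + q * B (i 1) (i 2)))) * KatQ ι A B rest := by
          rw [gwordF_succ, map_mul, hupd, hn0]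
          exact congrArg₂ (· * ·) (congrArg _ (of_g_eq hi0 hi1 _ _ _)) rfl
        have eqn : KatQ ι A B (gwordF ι A (k + 1) i' hA' (n ∘ Fin.succ)) =
            KatQ ι A B (FreeMonoid.of (Letter.g (i 1) (i 2) hA2 (n 1))) *
              KatQ ι A B rest := by
          rw [gwordF_succ, map_mul]
          have hns : (n ∘ Fin.succ) 0 = n 1 := by
            show n (Fin.succ 0) = n 1
            rw [Fin.succ_zero_eq_one]
          rw [hns]
          exact congrArg₂ (· * ·) (congrArg _ (of_g_eq hi0 hi1 _ _ _)) rfl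
        calc KatQ ι A B (gwordF ι A (k + 1 + 1) i hA n)
            = KatQ ι A B (FreeMonoid.of (Letter.g (i 0) (i 1) (hA 0) (n 0))) *
              KatQ ι A B (gwordF ι A (k + 1) i' hA' (n ∘ Fin.succ)) := by
              rw [gwordF_succ, map_mul]
          _ = KatQ ι A B (FreeMonoid.of (Letter.g (i 0) (i 1) (hA 0) (n 0))) *
              (KatQ ι A B (FreeMonoid.of (Letter.g (i 1) (i 2) hA2 (n 1))) *
                KatQ ι A B rest) := by rw [eqn]
          _ = KatQ ι A B (FreeMonoid.of (Letter.g (i 0) (i 1) (hA 0) m0)) *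
              (KatQ ι A B (FreeMonoid.of (Letter.g (i 1) (i 2) hA2
                (n 1 + q * B (i 1) (i 2)))) * KatQ ι A B rest) := by
              rw [map_mul, map_mul] at key
              rw [← mul_assoc, ← mul_assoc]
              exact congrArg₂ (· * ·) key rfl
          _ = KatQ ι A B (FreeMonoid.of (Letter.g (i 0) (i 1) (hA 0) m0)) *
              KatQ ι A B (gwordF ι A (k + 1) i' hA' n') := by rw [eqn']
          _ = KatQ ι A B (FreeMonoid.of (Letter.g (i 0) (i 1) (hA 0) m0)) *
              KatQ ι A B (gwordF ι A (k + 1) i' hA' m') := by rw [hm'eq]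
          _ = KatQ ι A B (gwordF ι A (k + 1 + 1) i hA (Fin.cons m0 m')) := by
              conv_rhs => rw [gwordF_succ]
              rw [map_mul, hcons]
              simp [Fin.cons_zero]
              rfl

end Aux

/-- Existence of standard form: every word in the letters `g` is congruent in `M` to a word
with the same index sequence whose coefficients `m_t` satisfy `1 ≤ m_t ≤ A i_t i_{t+1}` for
all `t < k - 1`. -/
theorem standard_form_exists (ι : Type) [Countable ι] [Nonempty ι]
    (A : ι → ι → ℕ) (B : ι → ι → ℤ)
    (hfin : ∀ i, {j | 1 ≤ A i j}.Finite) (hrow : ∀ i, ∃ j, 1 ≤ A i j)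
    (hB0 : ∀ i j, A i j = 0 → B i j = 0)
    (k : ℕ) (hk : 1 ≤ k) (i : Fin (k + 1) → ι)
    (hA : ∀ t : Fin k, 1 ≤ A (i t.castSucc) (i t.succ))
    (n : Fin k → ℤ) :
    ∃ m : Fin k → ℤ,
      (∀ t : Fin k, (t : ℕ) + 1 < k →
        1 ≤ m t ∧ m t ≤ (A (i t.castSucc) (i t.succ) : ℤ)) ∧
      KatQ ι A B (gwordF ι A k i hA n) = KatQ ι A B (gwordF ι A k i hA m) := by
  cases k with
  | zero => omega
  | succ k' => exact aux_standard B k' i hA n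
end

section
/- Uniqueness of standard form (Lemma 3.6 together with Remark 3.2): if two words of F in the letters g, both in standard form, have the same class in M, then they are equal as words (in particular they have the same length, the same index sequences, and the same coefficient sequences). Moreover, no word in standard form is congruent to z. -/
section Aux
variable {ι : Type} {A : ι → ι → ℕ} {B : ι → ι → ℤ}

/-- One carry move on lists of `g`-letters. -/
inductive Mv (B : ι → ι → ℤ) : List (Letter ι A) → List (Letter ι A) → Prop
  | head (a b c : ι) (h1 : 1 ≤ A a b) (h2 : 1 ≤ A b c) (n m : ℤ) (rest : List (Letter ι A)) :
      Mv B (Letter.g a b h1 (n + (A a b : ℤ)) :: Letter.g b c h2 m :: rest)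
           (Letter.g a b h1 n :: Letter.g b c h2 (m + B b c) :: rest)
  | tail (x : Letter ι A) {l l' : List (Letter ι A)} : Mv B l l' → Mv B (x :: l) (x :: l')

end Aux
section Aux2
open Classical
variable {ι : Type} {A : ι → ι → ℕ} (B : ι → ι → ℤ)

/-- Carrier: weighted vertices plus carry-classes of chains. -/
abbrev Yt (A : ι → ι → ℕ) (B : ι → ι → ℤ) : Type :=
  (ι × ℤ) ⊕ Quot (Mv (A := A) B)

noncomputable def gActL (i j : ι) (hij : 1 ≤ A i j) (n : ℤ) :
    List (Letter ι A) → Option (Yt A B)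
  | (Letter.g j' c h m :: rest) =>
      if j = j' then
        some (Sum.inr (Quot.mk _ (Letter.g i j hij n :: Letter.g j' c h m :: rest)))
      else none
  | _ => none

noncomputable def hActL (i : ι) : List (Letter ι A) → Option (Yt A B)
  | (Letter.g j c h m :: rest) =>
      if i = j then some (Sum.inr (Quot.mk _ (Letter.g j c h (m + B j c) :: rest))) else none
  | _ => none

lemma gActL_mv (i j : ι) (hij : 1 ≤ A i j) (n : ℤ) {l l' : List (Letter ι A)}
    (hm : Mv B l l') : gActL B i j hij n l = gActL B i j hij n l' := by
  cases hm with
  | head a b c h1 h2 n' m rest =>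
      simp only [gActL]
      by_cases hj : j = a
      · subst hj
        simp only [if_pos rfl]
        exact congrArg _ (congrArg _ (Quot.sound (Mv.tail _ (Mv.head _ _ _ _ _ _ _ _))))
      · simp [hj]
  | @tail x l l' hm =>
      cases x with
      | z => simp [gActL]
      | h a => simp [gActL]
      | g a c h m =>
          simp only [gActL]
          by_cases hj : j = a
          · subst hj
            simp only [if_pos rfl]
            exact congrArg _ (congrArg _ (Quot.sound (Mv.tail _ (Mv.tail _ hm))))
          · simp [hj]

lemma hActL_mv (i : ι) {l l' : List (Letter ι A)}
    (hm : Mv B l l') : hActL B i l = hActL B i l' := by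
  cases hm with
  | head a b c h1 h2 n m rest =>
      simp only [hActL]
      by_cases hj : i = a
      · subst hj
        simp only [if_pos rfl]
        refine congrArg _ (congrArg _ (Quot.sound ?_))
        have : n + (A i b : ℤ) + B i b = (n + B i b) + (A i b : ℤ) := by ring
        rw [this]
        exact Mv.head _ _ _ _ _ _ _ _
      · simp [hj]
  | @tail x l l' hm =>
      cases x with
      | z => simp [hActL]
      | h a => simp [hActL]
      | g a c h m =>
          simp only [hActL]
          by_cases hj : i = a
          · subst hj
            simp only [if_pos rfl]
            exact congrArg _ (congrArg _ (Quot.sound (Mv.tail _ hm)))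
          · simp [hj]

/-- Action of a letter on the carrier. -/
noncomputable def actY : Letter ι A → Yt A B → Option (Yt A B)
  | Letter.z, _ => none
  | Letter.h i, Sum.inl jc =>
      if i = jc.1 then some (Sum.inl (jc.1, jc.2 + 1)) else none
  | Letter.h i, Sum.inr q => Quot.lift (hActL B i) (fun _ _ hm => hActL_mv B i hm) q
  | Letter.g i j hij n, Sum.inl jc =>
      if j = jc.1 then
        some (Sum.inr (Quot.mk _ [Letter.g i j hij (n + jc.2 * (A i j : ℤ))]))
      else none
  | Letter.g i j hij n, Sum.inr q =>
      Quot.lift (gActL B i j hij n) (fun _ _ hm => gActL_mv B i j hij n hm) q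

noncomputable def fL : Letter ι A → Function.End (Option (Yt A B)) :=
  fun w oy => oy.bind (actY B w)

noncomputable def alA : FreeMonoid (Letter ι A) →* Function.End (Option (Yt A B)) :=
  FreeMonoid.lift (fL B)

lemma end_mul (f g : Function.End (Option (Yt A B))) (x : Option (Yt A B)) :
    (f * g) x = f (g x) := rfl

end Aux2

section Aux3
open Classical
variable {ι : Type} {A : ι → ι → ℕ} (B : ι → ι → ℤ)

-- computation step lemmas
lemma fL_none' (w : Letter ι A) : fL B w none = none := rfl
lemma fL_some (w : Letter ι A) (y : Yt A B) : fL B w (some y) = actY B w y := rfl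
lemma actY_z (y : Yt A B) : actY B Letter.z y = none := by cases y <;> rfl
lemma actY_h_inl (i l' : ι) (c : ℤ) :
    actY B (Letter.h i) (Sum.inl (l', c) : Yt A B) =
      if i = l' then some (Sum.inl (l', c + 1)) else none := rfl
lemma actY_h_inr (i : ι) (l : List (Letter ι A)) :
    actY B (Letter.h i) (Sum.inr (Quot.mk _ l) : Yt A B) = hActL B i l := rfl
lemma actY_g_inl (i j : ι) (hij : 1 ≤ A i j) (n : ℤ) (l' : ι) (c : ℤ) :
    actY B (Letter.g i j hij n) (Sum.inl (l', c) : Yt A B) =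
      if j = l' then some (Sum.inr (Quot.mk _ [Letter.g i j hij (n + c * (A i j : ℤ))]))
      else none := rfl
lemma actY_g_inr (i j : ι) (hij : 1 ≤ A i j) (n : ℤ) (l : List (Letter ι A)) :
    actY B (Letter.g i j hij n) (Sum.inr (Quot.mk _ l) : Yt A B) = gActL B i j hij n l := rfl
lemma gActL_cons (i j : ι) (hij : 1 ≤ A i j) (n : ℤ) (a b : ι) (hab : 1 ≤ A a b) (m : ℤ)
    (rest : List (Letter ι A)) :
    gActL B i j hij n (Letter.g a b hab m :: rest) =
      if j = a then
        some (Sum.inr (Quot.mk _ (Letter.g i j hij n :: Letter.g a b hab m :: rest)))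
      else none := rfl
lemma hActL_cons (i : ι) (a b : ι) (hab : 1 ≤ A a b) (m : ℤ) (rest : List (Letter ι A)) :
    hActL B i (Letter.g a b hab m :: rest) =
      if i = a then some (Sum.inr (Quot.mk _ (Letter.g a b hab (m + B a b) :: rest)))
      else none := rfl
lemma gActL_nil (i j : ι) (hij : 1 ≤ A i j) (n : ℤ) :
    gActL B i j hij n ([] : List (Letter ι A)) = none := rfl
lemma hActL_nil (i : ι) : hActL B i ([] : List (Letter ι A)) = none := rfl
lemma gActL_z (i j : ι) (hij : 1 ≤ A i j) (n : ℤ) (rest : List (Letter ι A)) :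
    gActL B i j hij n (Letter.z :: rest) = none := rfl
lemma hActL_z (i : ι) (rest : List (Letter ι A)) :
    hActL B i (Letter.z :: rest) = none := rfl
lemma gActL_h (i j : ι) (hij : 1 ≤ A i j) (n : ℤ) (a : ι) (rest : List (Letter ι A)) :
    gActL B i j hij n (Letter.h a :: rest) = none := rfl
lemma hActL_h (i a : ι) (rest : List (Letter ι A)) :
    hActL B i (Letter.h a :: rest) = none := rfl

lemma fLz_any (oy : Option (Yt A B)) : fL B Letter.z oy = none := by
  cases oy with
  | none => rfl
  | some y => rw [fL_some, actY_z]

lemma alA_of (w : Letter ι A) : alA B (FreeMonoid.of w) = fL B w :=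
  FreeMonoid.lift_eval_of _ _

lemma katRel_ker : ∀ x y, KatRel ι A B x y → alA B x = alA B y := by
  intro x y hxy
  have expand : ∀ (a b : Letter ι A),
      alA B (FreeMonoid.of a * FreeMonoid.of b) = fL B a * fL B b := by
    intro a b; rw [map_mul, alA_of, alA_of]
  cases hxy with
  | zl w =>
      rw [expand, alA_of]; funext oy
      show fL B Letter.z (fL B w oy) = fL B Letter.z oy
      rw [fLz_any, fLz_any]
  | zr w =>
      rw [expand, alA_of]; funext oy
      show fL B w (fL B Letter.z oy) = fL B Letter.z oy
      rw [fLz_any, fL_none']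
  | gh i j hij n =>
      rw [expand, alA_of]; funext oy
      show fL B (Letter.g i j hij n) (fL B (Letter.h j) oy) = _
      cases oy with
      | none => rfl
      | some y =>
        cases y with
        | inl jc =>
            obtain ⟨l', c⟩ := jc
            rw [fL_some, fL_some, actY_h_inl, actY_g_inl]
            by_cases hj : j = l'
            · subst hj
              rw [if_pos rfl, if_pos rfl, fL_some, actY_g_inl, if_pos rfl,
                show n + (c + 1) * (A i j : ℤ) = n + (A i j : ℤ) + c * (A i j : ℤ) from by ring]
            · rw [if_neg hj, if_neg hj, fL_none']
        | inr q =>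
            induction q using Quot.ind with
            | _ l =>
              rw [fL_some, fL_some, actY_h_inr, actY_g_inr]
              cases l with
              | nil => rw [hActL_nil, gActL_nil, fL_none']
              | cons x rest =>
                cases x with
                | z => rw [hActL_z, gActL_z, fL_none']
                | h a => rw [hActL_h, gActL_h, fL_none']
                | g a b hab mm =>
                  rw [hActL_cons, gActL_cons]
                  by_cases hj : j = a
                  · subst hj
                    rw [if_pos rfl, if_pos rfl, fL_some, actY_g_inr, gActL_cons, if_pos rfl,
                      ← Quot.sound (Mv.head i j b hij hab n mm rest)]
                  · rw [if_neg hj, if_neg hj, fL_none']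
  | hg i j hij n =>
      rw [expand, alA_of]; funext oy
      show fL B (Letter.h i) (fL B (Letter.g i j hij n) oy) = _
      cases oy with
      | none => rfl
      | some y =>
        cases y with
        | inl jc =>
            obtain ⟨l', c⟩ := jc
            rw [fL_some, fL_some, actY_g_inl, actY_g_inl]
            by_cases hj : j = l'
            · subst hj
              rw [if_pos rfl, if_pos rfl, fL_some, actY_h_inr, hActL_cons, if_pos rfl,
                show n + c * (A i j : ℤ) + B i j = n + B i j + c * (A i j : ℤ) from by ring]
            · rw [if_neg hj, if_neg hj, fL_none']
        | inr q =>
            induction q using Quot.ind with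
            | _ l =>
              rw [fL_some, fL_some, actY_g_inr, actY_g_inr]
              cases l with
              | nil => rw [gActL_nil, gActL_nil, fL_none']
              | cons x rest =>
                cases x with
                | z => rw [gActL_z, gActL_z, fL_none']
                | h a => rw [gActL_h, gActL_h, fL_none']
                | g a b hab mm =>
                  rw [gActL_cons, gActL_cons]
                  by_cases hj : j = a
                  · subst hj
                    rw [if_pos rfl, if_pos rfl, fL_some, actY_h_inr, hActL_cons, if_pos rfl]
                  · rw [if_neg hj, if_neg hj, fL_none']
  | hh i j hne =>
      rw [expand, alA_of]; funext oy
      show fL B (Letter.h i) (fL B (Letter.h j) oy) = fL B Letter.z oy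
      rw [fLz_any]
      cases oy with
      | none => rfl
      | some y =>
        cases y with
        | inl jc =>
            obtain ⟨l', c⟩ := jc
            rw [fL_some, actY_h_inl]
            by_cases hj : j = l'
            · subst hj
              rw [if_pos rfl, fL_some, actY_h_inl, if_neg hne]
            · rw [if_neg hj, fL_none']
        | inr q =>
            induction q using Quot.ind with
            | _ l =>
              rw [fL_some, actY_h_inr]
              cases l with
              | nil => rw [hActL_nil, fL_none']
              | cons x rest =>
                cases x with
                | z => rw [hActL_z, fL_none']
                | h a => rw [hActL_h, fL_none']
                | g a b hab mm =>
                  rw [hActL_cons]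
                  by_cases hj : j = a
                  · subst hj
                    rw [if_pos rfl, fL_some, actY_h_inr, hActL_cons, if_neg hne]
                  · rw [if_neg hj, fL_none']
  | hg' i i' j hij n hne =>
      rw [expand, alA_of]; funext oy
      show fL B (Letter.h i) (fL B (Letter.g i' j hij n) oy) = fL B Letter.z oy
      rw [fLz_any]
      cases oy with
      | none => rfl
      | some y =>
        cases y with
        | inl jc =>
            obtain ⟨l', c⟩ := jc
            rw [fL_some, actY_g_inl]
            by_cases hj : j = l'
            · subst hj
              rw [if_pos rfl, fL_some, actY_h_inr, hActL_cons, if_neg hne]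
            · rw [if_neg hj, fL_none']
        | inr q =>
            induction q using Quot.ind with
            | _ l =>
              rw [fL_some, actY_g_inr]
              cases l with
              | nil => rw [gActL_nil, fL_none']
              | cons x rest =>
                cases x with
                | z => rw [gActL_z, fL_none']
                | h a => rw [gActL_h, fL_none']
                | g a b hab mm =>
                  rw [gActL_cons]
                  by_cases hj : j = a
                  · subst hj
                    rw [if_pos rfl, fL_some, actY_h_inr, hActL_cons, if_neg hne]
                  · rw [if_neg hj, fL_none']
  | gh' i j k hij n hne =>
      rw [expand, alA_of]; funext oy
      show fL B (Letter.g i j hij n) (fL B (Letter.h k) oy) = fL B Letter.z oy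
      rw [fLz_any]
      cases oy with
      | none => rfl
      | some y =>
        cases y with
        | inl jc =>
            obtain ⟨l', c⟩ := jc
            rw [fL_some, actY_h_inl]
            by_cases hj : k = l'
            · subst hj
              rw [if_pos rfl, fL_some, actY_g_inl, if_neg hne]
            · rw [if_neg hj, fL_none']
        | inr q =>
            induction q using Quot.ind with
            | _ l =>
              rw [fL_some, actY_h_inr]
              cases l with
              | nil => rw [hActL_nil, fL_none']
              | cons x rest =>
                cases x with
                | z => rw [hActL_z, fL_none']
                | h a => rw [hActL_h, fL_none']
                | g a b hab mm =>
                  rw [hActL_cons]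
                  by_cases hj : k = a
                  · subst hj
                    rw [if_pos rfl, fL_some, actY_g_inr, gActL_cons, if_neg hne]
                  · rw [if_neg hj, fL_none']
  | gg i j j' l hij hjl n mm hne =>
      rw [expand, alA_of]; funext oy
      show fL B (Letter.g i j hij n) (fL B (Letter.g j' l hjl mm) oy) = fL B Letter.z oy
      rw [fLz_any]
      cases oy with
      | none => rfl
      | some y =>
        cases y with
        | inl jc =>
            obtain ⟨l2, c⟩ := jc
            rw [fL_some, actY_g_inl]
            by_cases hj : l = l2
            · subst hj
              rw [if_pos rfl, fL_some, actY_g_inr, gActL_cons, if_neg hne]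
            · rw [if_neg hj, fL_none']
        | inr q =>
            induction q using Quot.ind with
            | _ ll =>
              rw [fL_some, actY_g_inr]
              cases ll with
              | nil => rw [gActL_nil, fL_none']
              | cons x rest =>
                cases x with
                | z => rw [gActL_z, fL_none']
                | h a => rw [gActL_h, fL_none']
                | g a b hab m2 =>
                  rw [gActL_cons]
                  by_cases hj : l = a
                  · subst hj
                    rw [if_pos rfl, fL_some, actY_g_inr, gActL_cons, if_neg hne]
                  · rw [if_neg hj, fL_none']

end Aux3

section Aux4
open Classical
variable {ι : Type} {A : ι → ι → ℕ} (B : ι → ι → ℤ)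

/-- Nonempty chains of `g`-letters from `a` to `b`. -/
inductive Chn : ι → ι → List (Letter ι A) → Prop
  | single (a b : ι) (h : 1 ≤ A a b) (n : ℤ) : Chn a b [Letter.g a b h n]
  | cons (a b c : ι) (h : 1 ≤ A a b) (n : ℤ) (l : List (Letter ι A)) :
      Chn b c l → Chn a c (Letter.g a b h n :: l)

lemma alA_cons (x : Letter ι A) (l : List (Letter ι A)) (oy : Option (Yt A B)) :
    alA B (FreeMonoid.ofList (x :: l)) oy = fL B x (alA B (FreeMonoid.ofList l) oy) := by
  have : FreeMonoid.ofList (x :: l) = FreeMonoid.of x * FreeMonoid.ofList l := rfl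
  rw [this, map_mul, alA_of, end_mul]

lemma chn_head {a b : ι} {l : List (Letter ι A)} (hc : Chn a b l) :
    ∃ (d : ι) (h : 1 ≤ A a d) (n : ℤ) (rest : List (Letter ι A)),
      l = Letter.g a d h n :: rest := by
  cases hc with
  | single a b h n => exact ⟨b, h, n, [], rfl⟩
  | cons a d c h n l hc => exact ⟨d, h, n, l, rfl⟩

lemma act_chain {a b : ι} {l : List (Letter ι A)} (hc : Chn a b l) :
    alA B (FreeMonoid.ofList l) (some (Sum.inl (b, 0) : Yt A B)) =
      some (Sum.inr (Quot.mk _ l)) := by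
  induction hc with
  | single a b h n =>
      rw [alA_cons]
      show fL B _ (alA B 1 _) = _
      rw [map_one]
      show fL B _ (some (Sum.inl (b, 0))) = _
      rw [fL_some, actY_g_inl, if_pos rfl,
        show n + 0 * (A a b : ℤ) = n from by ring]
  | cons a d c h n l hc ih =>
      rw [alA_cons, ih]
      obtain ⟨d', hd, n', rest, rfl⟩ := chn_head hc
      rw [fL_some, actY_g_inr, gActL_cons, if_pos rfl]

lemma act_chain_none {a b : ι} {l : List (Letter ι A)} (hc : Chn a b l) (c : ι) (hbc : b ≠ c) :
    alA B (FreeMonoid.ofList l) (some (Sum.inl (c, 0) : Yt A B)) = none := by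
  induction hc with
  | single a b h n =>
      rw [alA_cons]
      show fL B _ (alA B 1 _) = _
      rw [map_one]
      show fL B _ (some (Sum.inl (c, 0))) = _
      rw [fL_some, actY_g_inl, if_neg hbc]
  | cons a d c' h n l hc ih =>
      rw [alA_cons, ih hbc, fL_none']

end Aux4

section Aux5
open Classical
variable {ι : Type} {A : ι → ι → ℕ} (B : ι → ι → ℤ)

/-- Left-to-right normalization of exponents with carries. -/
noncomputable def psi : List (Letter ι A) → List (Letter ι A)
  | [] => []
  | [x] => [x]
  | Letter.g a b h n :: Letter.g b' c h' m :: rest =>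
      if b = b' then
        Letter.g a b h ((n - 1) % (A a b : ℤ) + 1) ::
          psi (Letter.g b' c h' (m + ((n - 1) / (A a b : ℤ)) * B b' c) :: rest)
      else Letter.g a b h n :: psi (Letter.g b' c h' m :: rest)
  | x :: y :: rest => x :: psi (y :: rest)
  termination_by l => l.length

/-- Add `t` to the exponent of the first letter (if it is a `g`-letter). -/
def addFirst (t : ℤ) : List (Letter ι A) → List (Letter ι A)
  | Letter.g a b h n :: rest => Letter.g a b h (n + t) :: rest
  | l => l

lemma addFirst_zero (l : List (Letter ι A)) : addFirst 0 l = l := by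
  cases l with
  | nil => rfl
  | cons x rest => cases x <;> simp [addFirst]

lemma mv_shape {l l' : List (Letter ι A)} (hm : Mv B l l') :
    ∃ (x x' : Letter ι A) (r r' : List (Letter ι A)),
      l = x :: r ∧ l' = x' :: r' ∧
      (x = x' ∨ ∃ (a b : ι) (h : 1 ≤ A a b) (n n' : ℤ),
        x = Letter.g a b h n ∧ x' = Letter.g a b h n') := by
  cases hm with
  | head a b c h1 h2 n m rest =>
      exact ⟨_, _, _, _, rfl, rfl, Or.inr ⟨a, b, h1, _, _, rfl, rfl⟩⟩
  | tail x hm => exact ⟨x, x, _, _, rfl, rfl, Or.inl rfl⟩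

end Aux5

section Aux6
open Classical
variable {ι : Type} {A : ι → ι → ℕ} (B : ι → ι → ℤ)

lemma psi_nil : psi (B := B) ([] : List (Letter ι A)) = [] := by rw [psi]
lemma psi_single (x : Letter ι A) : psi B [x] = [x] := by rw [psi]
lemma psi_gg (a b : ι) (h : 1 ≤ A a b) (n : ℤ) (b' c : ι) (h' : 1 ≤ A b' c) (m : ℤ)
    (rest : List (Letter ι A)) :
    psi B (Letter.g a b h n :: Letter.g b' c h' m :: rest) =
      if b = b' then
        Letter.g a b h ((n - 1) % (A a b : ℤ) + 1) ::
          psi B (Letter.g b' c h' (m + ((n - 1) / (A a b : ℤ)) * B b' c) :: rest)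
      else Letter.g a b h n :: psi B (Letter.g b' c h' m :: rest) := by
  rw [psi] <;> (intros; simp_all)
lemma psi_zc (y : Letter ι A) (rest : List (Letter ι A)) :
    psi B (Letter.z :: y :: rest) = Letter.z :: psi B (y :: rest) := by
  rw [psi] <;> (intros; simp_all)
lemma psi_hc (i : ι) (y : Letter ι A) (rest : List (Letter ι A)) :
    psi B (Letter.h i :: y :: rest) = Letter.h i :: psi B (y :: rest) := by
  rw [psi] <;> (intros; simp_all)
lemma psi_gz (a b : ι) (h : 1 ≤ A a b) (n : ℤ) (rest : List (Letter ι A)) :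
    psi B (Letter.g a b h n :: Letter.z :: rest) =
      Letter.g a b h n :: psi B (Letter.z :: rest) := by
  rw [psi] <;> (intros; simp_all)
lemma psi_gh (a b : ι) (h : 1 ≤ A a b) (n : ℤ) (i : ι) (rest : List (Letter ι A)) :
    psi B (Letter.g a b h n :: Letter.h i :: rest) =
      Letter.g a b h n :: psi B (Letter.h i :: rest) := by
  rw [psi] <;> (intros; simp_all)

lemma psi_mv {l l' : List (Letter ι A)} (hm : Mv B l l') :
    ∀ t : ℤ, psi B (addFirst t l) = psi B (addFirst t l') := by
  induction hm with
  | head a b c h1 h2 n m rest =>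
      intro t
      have hA0 : (A a b : ℤ) ≠ 0 := by
        have : 1 ≤ A a b := h1
        omega
      show psi B (Letter.g a b h1 (n + (A a b : ℤ) + t) :: Letter.g b c h2 m :: rest) =
        psi B (Letter.g a b h1 (n + t) :: Letter.g b c h2 (m + B b c) :: rest)
      rw [psi_gg, psi_gg, if_pos rfl, if_pos rfl]
      have e1 : n + (A a b : ℤ) + t - 1 = (n + t - 1) + 1 * (A a b : ℤ) := by ring
      have hmod : (n + (A a b : ℤ) + t - 1) % (A a b : ℤ) = (n + t - 1) % (A a b : ℤ) := by
        rw [e1, Int.add_mul_emod_self_right]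
      have hdiv : (n + (A a b : ℤ) + t - 1) / (A a b : ℤ) = (n + t - 1) / (A a b : ℤ) + 1 := by
        rw [e1, Int.add_mul_ediv_right _ _ hA0]
      rw [hmod, hdiv]
      congr 2
      ring
  | @tail x l l' hm ih =>
      intro t
      obtain ⟨y, y', r, r', rfl, rfl, hyy⟩ := mv_shape B hm
      have ih0 : psi B (y :: r) = psi B (y' :: r') := by
        have := ih 0
        rwa [addFirst_zero, addFirst_zero] at this
      have key : ∀ (x' : Letter ι A), psi B (x' :: y :: r) = psi B (x' :: y' :: r') := by
        intro x'
        rcases hyy with rfl | ⟨a2, b2, h2, n2, n2', rfl, rfl⟩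
        · cases x' with
          | z => rw [psi_zc, psi_zc, ih0]
          | h i => rw [psi_hc, psi_hc, ih0]
          | g a b hb n =>
              cases y with
              | z => rw [psi_gz, psi_gz, ih0]
              | h i => rw [psi_gh, psi_gh, ih0]
              | g a2 b2 h2 n2 =>
                  rw [psi_gg, psi_gg]
                  by_cases hb2 : b = a2
                  · rw [if_pos hb2, if_pos hb2]
                    have := ih (((n - 1) / (A a b : ℤ)) * B a2 b2)
                    rw [show addFirst (((n - 1) / (A a b : ℤ)) * B a2 b2)
                        (Letter.g a2 b2 h2 n2 :: r) =
                      Letter.g a2 b2 h2 (n2 + ((n - 1) / (A a b : ℤ)) * B a2 b2) :: r from rfl,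
                      show addFirst (((n - 1) / (A a b : ℤ)) * B a2 b2)
                        (Letter.g a2 b2 h2 n2 :: r') =
                      Letter.g a2 b2 h2 (n2 + ((n - 1) / (A a b : ℤ)) * B a2 b2) :: r' from rfl]
                      at this
                    rw [this]
                  · rw [if_neg hb2, if_neg hb2, ih0]
        · cases x' with
          | z => rw [psi_zc, psi_zc, ih0]
          | h i => rw [psi_hc, psi_hc, ih0]
          | g a b hb n =>
              rw [psi_gg, psi_gg]
              by_cases hb2 : b = a2
              · rw [if_pos hb2, if_pos hb2]
                have := ih (((n - 1) / (A a b : ℤ)) * B a2 b2)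
                rw [show addFirst (((n - 1) / (A a b : ℤ)) * B a2 b2)
                    (Letter.g a2 b2 h2 n2 :: r) =
                  Letter.g a2 b2 h2 (n2 + ((n - 1) / (A a b : ℤ)) * B a2 b2) :: r from rfl,
                  show addFirst (((n - 1) / (A a b : ℤ)) * B a2 b2)
                    (Letter.g a2 b2 h2 n2' :: r') =
                  Letter.g a2 b2 h2 (n2' + ((n - 1) / (A a b : ℤ)) * B a2 b2) :: r' from rfl]
                  at this
                rw [this]
              · rw [if_neg hb2, if_neg hb2, ih0]
      cases x with
      | z => exact key Letter.z
      | h i => exact key (Letter.h i)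
      | g a b hb n =>
          show psi B (Letter.g a b hb (n + t) :: y :: r) =
            psi B (Letter.g a b hb (n + t) :: y' :: r')
          exact key (Letter.g a b hb (n + t))

/-- Standard-form lists of `g`-letters. -/
inductive Std : List (Letter ι A) → Prop
  | single (a b : ι) (h : 1 ≤ A a b) (n : ℤ) : Std [Letter.g a b h n]
  | cons (a b c : ι) (h : 1 ≤ A a b) (h' : 1 ≤ A b c) (n m : ℤ)
      (rest : List (Letter ι A)) (hn1 : 1 ≤ n) (hn2 : n ≤ (A a b : ℤ))
      (hs : Std (Letter.g b c h' m :: rest)) :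
      Std (Letter.g a b h n :: Letter.g b c h' m :: rest)

lemma psi_std {l : List (Letter ι A)} (hs : Std (A := A) l) : psi B l = l := by
  induction hs with
  | single a b h n => exact psi_single B _
  | cons a b c h h' n m rest hn1 hn2 hs ih =>
      rw [psi_gg, if_pos rfl]
      have h1 : (0 : ℤ) ≤ n - 1 := by omega
      have h2 : n - 1 < (A a b : ℤ) := by omega
      rw [Int.emod_eq_of_lt h1 h2, Int.ediv_eq_zero_of_lt h1 h2]
      simp only [zero_mul, add_zero, sub_add_cancel]
      rw [ih]

lemma psi_eqv {l l' : List (Letter ι A)} (he : Relation.EqvGen (Mv B) l l') :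
    psi B l = psi B l' := by
  induction he with
  | rel x y hxy =>
      have := psi_mv B hxy 0
      rwa [addFirst_zero, addFirst_zero] at this
  | refl x => rfl
  | symm x y _ ih => exact ih.symm
  | trans x y z _ _ ih1 ih2 => exact ih1.trans ih2

lemma std_unique {l l' : List (Letter ι A)} (hs : Std l) (hs' : Std l')
    (he : Quot.mk (Mv B) l = Quot.mk (Mv B) l') : l = l' := by
  have := psi_eqv B (Quot.eq.mp he)
  rwa [psi_std B hs, psi_std B hs'] at this

end Aux6

section Aux7
open Classical
variable {ι : Type} {A : ι → ι → ℕ} (B : ι → ι → ℤ)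

lemma letter_ext {a a' b b' : ι} {h : 1 ≤ A a b} {h' : 1 ≤ A a' b'} {n n' : ℤ}
    (ha : a = a') (hb : b = b') (hn : n = n') :
    Letter.g a b h n = Letter.g a' b' h' n' := by
  subst ha; subst hb; subst hn; rfl

def shiftHA {k : ℕ} (i : Fin (k + 1 + 1) → ι)
    (hA : ∀ t : Fin (k + 1), 1 ≤ A (i t.castSucc) (i t.succ)) :
    ∀ t : Fin k, 1 ≤ A ((fun s : Fin (k + 1) => i s.succ) t.castSucc)
      ((fun s : Fin (k + 1) => i s.succ) t.succ) := by
  intro t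
  show 1 ≤ A (i t.castSucc.succ) (i t.succ.succ)
  rw [Fin.succ_castSucc]
  exact hA t.succ

lemma ofFn_letters_succ {k : ℕ} (i : Fin (k + 1 + 1) → ι)
    (hA : ∀ t : Fin (k + 1), 1 ≤ A (i t.castSucc) (i t.succ)) (m : Fin (k + 1) → ℤ) :
    (List.ofFn fun t : Fin (k + 1) => Letter.g (i t.castSucc) (i t.succ) (hA t) (m t)) =
      Letter.g (i (0 : Fin (k + 1)).castSucc) (i (0 : Fin (k + 1)).succ) (hA 0) (m 0) ::
      (List.ofFn fun t : Fin k =>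
        Letter.g ((fun s : Fin (k + 1) => i s.succ) t.castSucc)
          ((fun s : Fin (k + 1) => i s.succ) t.succ) (shiftHA i hA t)
          ((fun s : Fin k => m s.succ) t)) := by
  rw [List.ofFn_succ]
  refine congrArg₂ List.cons rfl ?_
  apply congrArg List.ofFn
  funext t
  refine letter_ext ?_ rfl rfl
  show i t.succ.castSucc = i t.castSucc.succ
  rw [Fin.succ_castSucc]

lemma chn_ofFn : ∀ (k : ℕ), 1 ≤ k → ∀ (i : Fin (k + 1) → ι)
    (hA : ∀ t : Fin k, 1 ≤ A (i t.castSucc) (i t.succ)) (m : Fin k → ℤ),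
    Chn (i 0) (i (Fin.last k))
      (List.ofFn fun t : Fin k => Letter.g (i t.castSucc) (i t.succ) (hA t) (m t)) := by
  intro k
  induction k with
  | zero => omega
  | succ k ih =>
      intro _ i hA m
      cases k with
      | zero =>
          rw [List.ofFn_succ, List.ofFn_zero]
          exact Chn.single _ _ (hA 0) (m 0)
      | succ k2 =>
          rw [ofFn_letters_succ]
          have ihc := ih (by omega) (fun s : Fin (k2 + 1 + 1) => i s.succ)
            (shiftHA i hA) (fun s => m s.succ)
          have h1 := Chn.cons (i (0 : Fin (k2 + 2)).castSucc) (i (0 : Fin (k2 + 2)).succ)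
            (i ((Fin.last (k2 + 1)).succ)) (hA 0) (m 0) _ ihc
          have e1 : (0 : Fin (k2 + 2)).castSucc = (0 : Fin (k2 + 3)) := by simp
          have e2 : (Fin.last (k2 + 1)).succ = Fin.last (k2 + 2) := Fin.succ_last _
          rw [← e1, ← e2]
          exact h1

lemma std_cons {a b c : ι} {h : 1 ≤ A a b} {n : ℤ} {l : List (Letter ι A)}
    (hs : Std l) (hc : Chn b c l) (hn1 : 1 ≤ n) (hn2 : n ≤ (A a b : ℤ)) :
    Std (Letter.g a b h n :: l) := by
  obtain ⟨d, h', n', rest, rfl⟩ := chn_head hc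
  exact Std.cons a b d h h' n n' rest hn1 hn2 hs

lemma std_ofFn : ∀ (k : ℕ), 1 ≤ k → ∀ (i : Fin (k + 1) → ι)
    (hA : ∀ t : Fin k, 1 ≤ A (i t.castSucc) (i t.succ)) (m : Fin k → ℤ),
    (∀ t : Fin k, (t : ℕ) + 1 < k → 1 ≤ m t ∧ m t ≤ (A (i t.castSucc) (i t.succ) : ℤ)) →
    Std (List.ofFn fun t : Fin k => Letter.g (i t.castSucc) (i t.succ) (hA t) (m t)) := by
  intro k
  induction k with
  | zero => omega
  | succ k ih =>
      intro _ i hA m hstd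
      cases k with
      | zero =>
          rw [List.ofFn_succ, List.ofFn_zero]
          exact Std.single _ _ _ _
      | succ k2 =>
          rw [ofFn_letters_succ]
          have hstd2 : ∀ t : Fin (k2 + 1), (t : ℕ) + 1 < k2 + 1 →
              1 ≤ (fun s : Fin (k2 + 1) => m s.succ) t ∧
              (fun s : Fin (k2 + 1) => m s.succ) t ≤
              (A ((fun s : Fin (k2 + 1 + 1) => i s.succ) t.castSucc)
                 ((fun s : Fin (k2 + 1 + 1) => i s.succ) t.succ) : ℤ) := by
            intro t ht
            have h2 := hstd t.succ (by rw [Fin.val_succ]; omega)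
            refine ⟨h2.1, ?_⟩
            show m t.succ ≤ (A (i t.castSucc.succ) (i t.succ.succ) : ℤ)
            rw [Fin.succ_castSucc]
            exact h2.2
          have ihs := ih (by omega) (fun s : Fin (k2 + 1 + 1) => i s.succ)
            (shiftHA i hA) (fun s => m s.succ) hstd2
          have ihc := chn_ofFn (k2 + 1) (by omega) (fun s : Fin (k2 + 1 + 1) => i s.succ)
            (shiftHA i hA) (fun s => m s.succ)
          have hb := hstd 0 (by simp)
          exact std_cons ihs ihc hb.1 hb.2

lemma gword_eq : ∀ (k : ℕ) (i : Fin (k + 1) → ι)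
    (hA : ∀ t : Fin k, 1 ≤ A (i t.castSucc) (i t.succ)) (m : Fin k → ℤ),
    gwordF ι A k i hA m = FreeMonoid.ofList
      (List.ofFn fun t : Fin k => Letter.g (i t.castSucc) (i t.succ) (hA t) (m t)) := by
  intro k
  induction k with
  | zero => intro i hA m; rfl
  | succ k ih =>
      intro i hA m
      show (List.ofFn fun t : Fin (k + 1) =>
        FreeMonoid.of (Letter.g (i t.castSucc) (i t.succ) (hA t) (m t))).prod = _
      rw [List.ofFn_succ, List.prod_cons]
      have e1 : (List.ofFn fun t : Fin k =>
          FreeMonoid.of (Letter.g (i t.succ.castSucc) (i t.succ.succ) (hA t.succ) (m t.succ))) =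
          (List.ofFn fun t : Fin k =>
          FreeMonoid.of (Letter.g ((fun s : Fin (k + 1) => i s.succ) t.castSucc)
            ((fun s : Fin (k + 1) => i s.succ) t.succ) (shiftHA i hA t)
            ((fun s : Fin k => m s.succ) t))) := by
        apply congrArg List.ofFn
        funext t
        refine congrArg FreeMonoid.of (letter_ext ?_ rfl rfl)
        show i t.succ.castSucc = i t.castSucc.succ
        rw [Fin.succ_castSucc]
      rw [e1]
      have ihw := ih (fun s : Fin (k + 1) => i s.succ) (shiftHA i hA) (fun s => m s.succ)
      show FreeMonoid.of _ * gwordF ι A k (fun s : Fin (k + 1) => i s.succ)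
          (shiftHA i hA) (fun s => m s.succ) = _
      rw [ihw, ofFn_letters_succ]
      rfl

end Aux7

/-- Uniqueness of standard form: if two words in the letters `g`, both in standard form,
have the same class in `M`, then they are equal as words of the free monoid (in particular
same length, same index sequences, same coefficients); moreover no standard-form word is
congruent to `z`. -/
theorem standard_form_unique (ι : Type) [Countable ι] [Nonempty ι]
    (A : ι → ι → ℕ) (B : ι → ι → ℤ)
    (hfin : ∀ i, {j | 1 ≤ A i j}.Finite) (hrow : ∀ i, ∃ j, 1 ≤ A i j)
    (hB0 : ∀ i j, A i j = 0 → B i j = 0)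
    (k k' : ℕ) (hk : 1 ≤ k) (hk' : 1 ≤ k')
    (i : Fin (k + 1) → ι) (i' : Fin (k' + 1) → ι)
    (hA : ∀ t : Fin k, 1 ≤ A (i t.castSucc) (i t.succ))
    (hA' : ∀ t : Fin k', 1 ≤ A (i' t.castSucc) (i' t.succ))
    (m : Fin k → ℤ) (m' : Fin k' → ℤ)
    (hstd : ∀ t : Fin k, (t : ℕ) + 1 < k →
      1 ≤ m t ∧ m t ≤ (A (i t.castSucc) (i t.succ) : ℤ))
    (hstd' : ∀ t : Fin k', (t : ℕ) + 1 < k' →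
      1 ≤ m' t ∧ m' t ≤ (A (i' t.castSucc) (i' t.succ) : ℤ)) :
    (KatQ ι A B (gwordF ι A k i hA m) = KatQ ι A B (gwordF ι A k' i' hA' m') →
      gwordF ι A k i hA m = gwordF ι A k' i' hA' m') ∧
    KatQ ι A B (gwordF ι A k i hA m) ≠ zeroM ι A B := by
  classical
  have hker : KatCon ι A B ≤ Con.ker (alA B) :=
    Con.conGen_le.mpr (fun x y hxy => (Con.ker_rel _).mpr (katRel_ker B x y hxy))
  set φ := (KatCon ι A B).lift (alA B) hker with hφdef
  have hφ : ∀ w, φ (KatQ ι A B w) = alA B w := fun w => Con.lift_mk' hker w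
  have hchn := chn_ofFn (A := A) k hk i hA m
  have hchn' := chn_ofFn (A := A) k' hk' i' hA' m'
  have hstdl := std_ofFn (A := A) k hk i hA m hstd
  have hstdl' := std_ofFn (A := A) k' hk' i' hA' m' hstd'
  constructor
  · intro heq
    have h2 : alA B (gwordF ι A k i hA m) = alA B (gwordF ι A k' i' hA' m') := by
      rw [← hφ, ← hφ, heq]
    rw [gword_eq k i hA m, gword_eq k' i' hA' m'] at h2
    have h3 := congrFun h2 (some (Sum.inl (i (Fin.last k), 0) : Yt A B))
    rw [act_chain B hchn] at h3
    by_cases hend : i' (Fin.last k') = i (Fin.last k)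
    · rw [← hend, act_chain B hchn'] at h3
      have h5 := Option.some.inj h3
      have h6 := Sum.inr.inj h5
      have h7 := std_unique B hstdl hstdl' h6
      rw [gword_eq k i hA m, gword_eq k' i' hA' m']
      exact congrArg FreeMonoid.ofList h7
    · rw [act_chain_none B hchn' _ hend] at h3
      exact absurd h3 (by simp)
  · intro h0
    have h2 : alA B (gwordF ι A k i hA m) = alA B (FreeMonoid.of Letter.z) := by
      rw [← hφ, ← hφ]
      exact congrArg φ h0
    rw [gword_eq k i hA m, alA_of] at h2
    have h3 := congrFun h2 (some (Sum.inl (i (Fin.last k), 0) : Yt A B))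
    rw [act_chain B hchn, fLz_any] at h3
    exact absurd h3 (by simp)
end

section
/- Every element of the semigroupoid Λ_{A,B} is monic (Proposition 3.7): for all a, b, c ∈ M, if a·b = a·c and a·b ≠ 0, then b = c. -/
namespace KatAux
set_option linter.unusedSectionVars false

variable {ι : Type} [DecidableEq ι] (A : ι → ι → ℕ) (B : ι → ι → ℤ)

/-- Normal forms. -/
inductive NF (ι : Type) : Type where
  | zero : NF ι
  | one : NF ι
  | h : ι → ℕ → NF ι
  | g : ι → ι → ℤ → List (ι × ℤ) → NF ι

/-- Normalize a chain `g(i,j,n)·(chain described by r)`, reducing every `n` except the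
last one modulo the corresponding `A`-entry, pushing quotients to the right using `B`. -/
def normC : ι → ι → ℤ → List (ι × ℤ) → ℤ × List (ι × ℤ)
  | _, _, n, [] => (n, [])
  | i, j, n, (l, m) :: r =>
      let q := n / (A i j : ℤ)
      let p := normC j l (m + q * B j l) r
      (n % (A i j : ℤ), (l, p.1) :: p.2)

/-- Left multiplication by a letter on normal forms. -/
def lmul : Letter ι A → NF ι → NF ι
  | Letter.z, _ => NF.zero
  | Letter.h i, x =>
    match x with
    | NF.zero => NF.zero
    | NF.one => NF.h i 0
    | NF.h i' m => if i = i' then NF.h i' (m + 1) else NF.zero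
    | NF.g i' j n r =>
        if i = i' then
          NF.g i' j (normC A B i' j (n + B i' j) r).1 (normC A B i' j (n + B i' j) r).2
        else NF.zero
  | Letter.g i j _ n, x =>
    match x with
    | NF.zero => NF.zero
    | NF.one => NF.g i j n []
    | NF.h j' m => if j = j' then NF.g i j (n + (m + 1) * A i j) [] else NF.zero
    | NF.g j' l m r =>
        if j = j' then
          NF.g i j (normC A B i j n ((l, m) :: r)).1 (normC A B i j n ((l, m) :: r)).2
        else NF.zero

@[simp] lemma lmul_zero (l : Letter ι A) : lmul A B l NF.zero = NF.zero := by
  cases l <;> rfl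

/-- The lift of `lmul` to the free monoid, valued in endomorphisms of `NF ι`. -/
def Phi : FreeMonoid (Letter ι A) →* Function.End (NF ι) :=
  FreeMonoid.lift (fun l => lmul A B l)

/-- Key shift lemma: renormalizing a normalized chain whose head has been shifted. -/
lemma norm_shift (r : List (ι × ℤ)) : ∀ (i j : ι) (n c : ℤ),
    normC A B i j ((normC A B i j n r).1 + c) (normC A B i j n r).2 =
      normC A B i j (n + c) r := by
  induction r with
  | nil => intro i j n c; simp [normC]
  | cons p r ih =>
    obtain ⟨l, m⟩ := p
    intro i j n c
    by_cases h0 : (A i j : ℤ) = 0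
    · simp only [normC, h0, Int.emod_zero, Int.ediv_zero, zero_mul, add_zero]
      have h2 := ih j l m 0
      simp only [add_zero] at h2
      rw [h2]
    · simp only [normC]
      have hq2 : (n % (A i j : ℤ) + c) / (A i j : ℤ) = (n + c) / (A i j : ℤ) - n / (A i j : ℤ) := by
        have h1 : n % (A i j : ℤ) + c = (n + c) + (-(n / (A i j : ℤ))) * (A i j : ℤ) := by
          rw [Int.emod_def]; ring
        rw [h1, Int.add_mul_ediv_right _ _ h0]; ring
      have hr2 : (n % (A i j : ℤ) + c) % (A i j : ℤ) = (n + c) % (A i j : ℤ) := by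
        have h1 : n % (A i j : ℤ) + c = (n + c) + (-(n / (A i j : ℤ))) * (A i j : ℤ) := by
          rw [Int.emod_def]; ring
        rw [h1, Int.add_mul_emod_self_right]
      rw [hq2, hr2, ih, show m + n / (A i j : ℤ) * B j l +
        ((n + c) / (A i j : ℤ) - n / (A i j : ℤ)) * B j l
          = m + (n + c) / (A i j : ℤ) * B j l from by ring]


section Quot

variable (ι)

lemma Qrel {u v : FreeMonoid (Letter ι A)} (h : KatRel ι A B u v) :
    KatQ ι A B u = KatQ ι A B v :=
  (Con.eq _).mpr (ConGen.Rel.of _ _ h)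

lemma zeroM_mul (x : KatM ι A B) : zeroM ι A B * x = zeroM ι A B := by
  induction x using Con.induction_on with
  | H w =>
    induction w using FreeMonoid.inductionOn' with
    | one => exact mul_one _
    | of_mul a w ih =>
      have : (↑(FreeMonoid.of a * w) : KatM ι A B)
          = KatQ ι A B (FreeMonoid.of a) * ↑w := rfl
      rw [this, ← mul_assoc]
      have h2 : zeroM ι A B * KatQ ι A B (FreeMonoid.of a) = zeroM ι A B := by
        have := Qrel ι A B (KatRel.zl a)
        rw [map_mul] at this
        exact this
      rw [h2, ih]

lemma mul_zeroM (x : KatM ι A B) : x * zeroM ι A B = zeroM ι A B := by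
  induction x using Con.induction_on with
  | H w =>
    induction w using FreeMonoid.inductionOn' with
    | one => exact one_mul _
    | of_mul a w ih =>
      have : (↑(FreeMonoid.of a * w) : KatM ι A B)
          = KatQ ι A B (FreeMonoid.of a) * ↑w := rfl
      rw [this, mul_assoc, ih]
      have := Qrel ι A B (KatRel.zr a)
      rw [map_mul] at this
      exact this

end Quot

/-- The class of a single `g` letter, or `0` if the indices are not admissible. -/
def gElt (i j : ι) (n : ℤ) : KatM ι A B :=
  if h : 1 ≤ A i j then KatQ ι A B (FreeMonoid.of (Letter.g i j h n)) else zeroM ι A B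

lemma gElt_h (i j : ι) (n : ℤ) :
    gElt A B i j n * KatQ ι A B (FreeMonoid.of (Letter.h j)) = gElt A B i j (n + A i j) := by
  by_cases h : 1 ≤ A i j
  · rw [gElt, gElt, dif_pos h, dif_pos h]
    have := Qrel ι A B (KatRel.gh i j h n)
    rw [map_mul] at this
    exact this
  · rw [gElt, gElt, dif_neg h, dif_neg h]
    exact zeroM_mul ι A B _

lemma h_gElt (i j : ι) (n : ℤ) :
    KatQ ι A B (FreeMonoid.of (Letter.h i)) * gElt A B i j n = gElt A B i j (n + B i j) := by
  by_cases h : 1 ≤ A i j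
  · rw [gElt, gElt, dif_pos h, dif_pos h]
    have := Qrel ι A B (KatRel.hg i j h n)
    rw [map_mul] at this
    exact this
  · rw [gElt, gElt, dif_neg h, dif_neg h]
    exact mul_zeroM ι A B _

lemma h_gElt_ne (i i' j : ι) (hne : i ≠ i') (n : ℤ) :
    KatQ ι A B (FreeMonoid.of (Letter.h i)) * gElt A B i' j n = zeroM ι A B := by
  by_cases h : 1 ≤ A i' j
  · rw [gElt, dif_pos h]
    have := Qrel ι A B (KatRel.hg' i i' j h n hne)
    rw [map_mul] at this
    exact this
  · rw [gElt, dif_neg h]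
    exact mul_zeroM ι A B _

lemma gElt_move (i j l : ι) (n m : ℤ) :
    gElt A B i j (n + A i j) * gElt A B j l m = gElt A B i j n * gElt A B j l (m + B j l) := by
  rw [← gElt_h, mul_assoc, h_gElt]

/-- The class of a tail of a chain. -/
def psiTail : ι → List (ι × ℤ) → KatM ι A B
  | _, [] => 1
  | j, (l, m) :: r => gElt A B j l m * psiTail l r

/-- The interpretation of normal forms back in the quotient monoid. -/
def psi : NF ι → KatM ι A B
  | NF.zero => zeroM ι A B
  | NF.one => 1
  | NF.h i m => (KatQ ι A B (FreeMonoid.of (Letter.h i))) ^ (m + 1)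
  | NF.g i j n r => gElt A B i j n * psiTail A B j r

lemma move1 (i j l : ι) (n m : ℤ) (T : KatM ι A B) :
    gElt A B i j (n + A i j) * (gElt A B j l m * T) =
      gElt A B i j n * (gElt A B j l (m + B j l) * T) := by
  rw [← mul_assoc, ← mul_assoc, gElt_move]

lemma chain_move (i j l : ι) (q : ℤ) : ∀ (n m : ℤ) (T : KatM ι A B),
    gElt A B i j (n + q * A i j) * (gElt A B j l m * T) =
      gElt A B i j n * (gElt A B j l (m + q * B j l) * T) := by
  induction q using Int.induction_on with
  | zero => intro n m T; simp
  | succ q ih =>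
    intro n m T
    rw [show n + (q + 1) * (A i j : ℤ) = (n + q * A i j) + A i j from by ring,
      move1, ih, show m + B j l + q * B j l = m + (q + 1) * B j l from by ring]
  | pred q ih =>
    intro n m T
    rw [show gElt A B i j (n + (-q - 1) * (A i j : ℤ)) * (gElt A B j l m * T)
        = gElt A B i j ((n + (-q - 1) * (A i j : ℤ))) * (gElt A B j l ((m - B j l) + B j l) * T)
        from by ring_nf,
      ← move1, show n + (-q - 1) * (A i j : ℤ) + A i j = n + (-q) * A i j from by ring,
      ih, show m - B j l + -q * B j l = m + (-q - 1) * B j l from by ring]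

lemma psi_norm (r : List (ι × ℤ)) : ∀ (i j : ι) (n : ℤ),
    gElt A B i j n * psiTail A B j r =
      gElt A B i j (normC A B i j n r).1 * psiTail A B j (normC A B i j n r).2 := by
  induction r with
  | nil => intro i j n; simp [normC]
  | cons p r ih =>
    obtain ⟨l, m⟩ := p
    intro i j n
    have key := chain_move A B i j l (n / (A i j : ℤ)) (n % (A i j : ℤ)) m (psiTail A B l r)
    rw [show n % (A i j : ℤ) + n / (A i j : ℤ) * (A i j : ℤ) = n from by
      rw [Int.emod_def]; ring] at key
    rw [show psiTail A B j ((l, m) :: r) = gElt A B j l m * psiTail A B l r from rfl, key,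
      ih, normC]
    rfl

lemma gElt_hpow (i j : ι) (n : ℤ) (k : ℕ) :
    gElt A B i j n * (KatQ ι A B (FreeMonoid.of (Letter.h j))) ^ k
      = gElt A B i j (n + k * A i j) := by
  induction k generalizing n with
  | zero => simp
  | succ k ih =>
    rw [pow_succ, ← mul_assoc, ih, gElt_h]
    congr 1
    push_cast
    ring

lemma Qg_h_ne (i j k : ι) (hij : 1 ≤ A i j) (n : ℤ) (hne : j ≠ k) :
    KatQ ι A B (FreeMonoid.of (Letter.g i j hij n)) * KatQ ι A B (FreeMonoid.of (Letter.h k))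
      = zeroM ι A B := by
  have := Qrel ι A B (KatRel.gh' i j k hij n hne)
  rw [map_mul] at this
  exact this

lemma Qg_gElt_ne (i j j' l : ι) (hij : 1 ≤ A i j) (n m : ℤ) (hne : j ≠ j') :
    KatQ ι A B (FreeMonoid.of (Letter.g i j hij n)) * gElt A B j' l m = zeroM ι A B := by
  by_cases h : 1 ≤ A j' l
  · rw [gElt, dif_pos h]
    have := Qrel ι A B (KatRel.gg i j j' l hij h n m hne)
    rw [map_mul] at this
    exact this
  · rw [gElt, dif_neg h]
    exact mul_zeroM ι A B _

lemma Qh_h_ne (i j : ι) (hne : i ≠ j) :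
    KatQ ι A B (FreeMonoid.of (Letter.h i)) * KatQ ι A B (FreeMonoid.of (Letter.h j))
      = zeroM ι A B := by
  have := Qrel ι A B (KatRel.hh i j hne)
  rw [map_mul] at this
  exact this

/-- The key compatibility: `psi` intertwines the letter action and left multiplication. -/
lemma psi_lmul (l : Letter ι A) (x : NF ι) :
    psi A B (lmul A B l x) = KatQ ι A B (FreeMonoid.of l) * psi A B x := by
  cases l with
  | z =>
    have hz : KatQ ι A B (FreeMonoid.of (Letter.z)) = zeroM ι A B := rfl
    rw [hz]
    cases x <;> simp [lmul, psi, zeroM_mul]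
  | h i =>
    cases x with
    | zero => simp [lmul, psi, mul_zeroM]
    | one => simp [lmul, psi]
    | h i' m =>
      by_cases h : i = i'
      · subst h
        simp only [lmul, psi, eq_self_iff_true, if_true]
        rw [pow_succ']
      · simp only [lmul, if_neg h, psi]
        rw [pow_succ', ← mul_assoc, Qh_h_ne A B i i' h, zeroM_mul]
    | g i' j n r =>
      by_cases h : i = i'
      · subst h
        simp only [lmul, psi, eq_self_iff_true, if_true]
        rw [← psi_norm, ← mul_assoc, h_gElt]
      · simp only [lmul, if_neg h, psi]
        rw [← mul_assoc, h_gElt_ne A B i i' j h, zeroM_mul]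
  | g i j hij n =>
    cases x with
    | zero => simp [lmul, psi, mul_zeroM]
    | one =>
      simp only [lmul, psi, psiTail]
      rw [gElt, dif_pos hij]
    | h j' m =>
      by_cases h : j = j'
      · subst h
        simp only [lmul, psi, psiTail, eq_self_iff_true, if_true]
        rw [mul_one, show n + ((m : ℤ) + 1) * (A i j : ℤ) = n + ((m + 1 : ℕ) : ℤ) * (A i j : ℤ)
          from by push_cast; ring, ← gElt_hpow A B i j n (m+1), gElt, dif_pos hij]
      · simp only [lmul, if_neg h, psi]
        rw [pow_succ', ← mul_assoc, Qg_h_ne A B i j j' hij n h, zeroM_mul]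
    | g j' l m r =>
      by_cases h : j = j'
      · subst h
        simp only [lmul, psi, eq_self_iff_true, if_true]
        rw [← psi_norm]
        rw [show psiTail A B j ((l, m) :: r) = gElt A B j l m * psiTail A B l r from rfl,
          ← mul_assoc, gElt, dif_pos hij]
        rw [mul_assoc]
      · simp only [lmul, if_neg h, psi]
        rw [← mul_assoc, Qg_gElt_ne A B i j j' l hij n m h, zeroM_mul]

lemma norm_cons_norm (i j l : ι) (n m : ℤ) (r : List (ι × ℤ)) :
    normC A B i j n ((l, (normC A B j l m r).1) :: (normC A B j l m r).2)
      = normC A B i j n ((l, m) :: r) := by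
  simp only [normC]
  rw [norm_shift]

lemma norm_cons_A (i j l : ι) (hij : 1 ≤ A i j) (n m : ℤ) (r : List (ι × ℤ)) :
    normC A B i j (n + A i j) ((l, m) :: r) = normC A B i j n ((l, m + B j l) :: r) := by
  have hA : (A i j : ℤ) ≠ 0 := by positivity
  simp only [normC]
  rw [show n + (A i j : ℤ) = n + 1 * (A i j : ℤ) from by ring,
    Int.add_mul_emod_self_right, Int.add_mul_ediv_right _ _ hA,
    show m + (n / (A i j : ℤ) + 1) * B j l = (m + B j l) + (n / (A i j : ℤ)) * B j l
      from by ring]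

lemma phi_rel {u v : FreeMonoid (Letter ι A)} (h : KatRel ι A B u v) :
    Phi A B u = Phi A B v := by
  have ev : ∀ (a b : Letter ι A) (x : NF ι),
      Phi A B (FreeMonoid.of a * FreeMonoid.of b) x = lmul A B a (lmul A B b x) := by
    intro a b x
    rfl
  have ev1 : ∀ (a : Letter ι A) (x : NF ι), Phi A B (FreeMonoid.of a) x = lmul A B a x := by
    intro a x; rfl
  cases h with
  | zl w => funext x; rw [ev, ev1]; rfl
  | zr w => funext x; rw [ev, ev1]; cases w <;> rfl
  | gh i j hij n =>
    funext x
    rw [ev, ev1]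
    cases x with
    | zero => rfl
    | one =>
      simp only [lmul, eq_self_iff_true, if_true]
      norm_num
    | h j' m =>
      by_cases h : j = j'
      · subst h
        simp only [lmul, eq_self_iff_true, if_true]
        congr 1
        push_cast
        ring
      · simp only [lmul, if_neg h]
    | g j' l m r =>
      by_cases h : j = j'
      · subst h
        simp only [lmul, eq_self_iff_true, if_true]
        rw [norm_cons_norm, norm_cons_A A B i j l hij]
      · simp only [lmul, if_neg h]
  | hg i j hij n =>
    funext x
    rw [ev, ev1]
    cases x with
    | zero => rfl
    | one =>
      simp only [lmul, eq_self_iff_true, if_true, normC]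
    | h j' m =>
      by_cases h : j = j'
      · subst h
        simp only [lmul, eq_self_iff_true, if_true, normC]
        congr 1
        ring
      · simp only [lmul, if_neg h]
    | g j' l m r =>
      by_cases h : j = j'
      · subst h
        simp only [lmul, eq_self_iff_true, if_true]
        rw [norm_shift]
      · simp only [lmul, if_neg h]
  | hh i j hne =>
    funext x
    rw [ev, ev1]
    cases x with
    | zero => rfl
    | one => simp only [lmul, if_neg hne]
    | h j' m =>
      by_cases h : j = j'
      · subst h; simp only [lmul, eq_self_iff_true, if_true, if_neg hne]
      · simp only [lmul, if_neg h]
    | g j' l m r =>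
      by_cases h : j = j'
      · subst h; simp only [lmul, eq_self_iff_true, if_true, if_neg hne]
      · simp only [lmul, if_neg h]
  | hg' i i' j hij n hne =>
    funext x
    rw [ev, ev1]
    cases x with
    | zero => rfl
    | one => simp only [lmul, if_neg hne]
    | h j' m =>
      by_cases h : j = j'
      · subst h; simp only [lmul, eq_self_iff_true, if_true, if_neg hne]
      · simp only [lmul, if_neg h]
    | g j' l m r =>
      by_cases h : j = j'
      · subst h; simp only [lmul, eq_self_iff_true, if_true, if_neg hne]
      · simp only [lmul, if_neg h]
  | gh' i j k hij n hne =>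
    funext x
    rw [ev, ev1]
    cases x with
    | zero => rfl
    | one => simp only [lmul, if_neg hne]
    | h j' m =>
      by_cases h : k = j'
      · subst h; simp only [lmul, eq_self_iff_true, if_true, if_neg hne]
      · simp only [lmul, if_neg h]
    | g j' l m r =>
      by_cases h : k = j'
      · subst h; simp only [lmul, eq_self_iff_true, if_true, if_neg hne]
      · simp only [lmul, if_neg h]
  | gg i j j' l hij hjl n m hne =>
    funext x
    rw [ev, ev1]
    cases x with
    | zero => rfl
    | one => simp only [lmul, if_neg hne]
    | h k m' =>
      by_cases h : l = k
      · subst h; simp only [lmul, eq_self_iff_true, if_true, if_neg hne]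
      · simp only [lmul, if_neg h]
    | g k k' m' r =>
      by_cases h : l = k
      · subst h; simp only [lmul, eq_self_iff_true, if_true, if_neg hne]
      · simp only [lmul, if_neg h]

/-- Index-validity of a chain. -/
def ValidC : ι → ι → List (ι × ℤ) → Prop
  | i, j, [] => 1 ≤ A i j
  | i, j, (l, _) :: r => 1 ≤ A i j ∧ ValidC j l r

/-- Canonicity of a chain: valid indices, and every value except the last is reduced. -/
def CanonC : ι → ι → ℤ → List (ι × ℤ) → Prop
  | i, j, _, [] => 1 ≤ A i j
  | i, j, n, (l, m) :: r => 1 ≤ A i j ∧ 0 ≤ n ∧ n < A i j ∧ CanonC j l m r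

/-- Canonicity of a normal form. -/
def Canon : NF ι → Prop
  | NF.g i j n r => CanonC A i j n r
  | _ => True

lemma canonC_validC (r : List (ι × ℤ)) : ∀ (i j : ι) (n : ℤ),
    CanonC A i j n r → ValidC A i j r := by
  induction r with
  | nil => intro i j n h; exact h
  | cons p r ih =>
    obtain ⟨l, m⟩ := p
    intro i j n h
    exact ⟨h.1, ih j l m h.2.2.2⟩

lemma validC_norm (r : List (ι × ℤ)) : ∀ (i j : ι) (n : ℤ),
    ValidC A i j r → CanonC A i j (normC A B i j n r).1 (normC A B i j n r).2 := by
  induction r with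
  | nil => intro i j n h; exact h
  | cons p r ih =>
    obtain ⟨l, m⟩ := p
    intro i j n h
    have hA : (0 : ℤ) < A i j := by exact_mod_cast h.1
    exact ⟨h.1, Int.emod_nonneg n (by omega), Int.emod_lt_of_pos n hA, ih _ _ _ h.2⟩

lemma canon_lmul (w : Letter ι A) (x : NF ι) (hx : Canon A x) : Canon A (lmul A B w x) := by
  cases w with
  | z => trivial
  | h i =>
    cases x with
    | zero => trivial
    | one => trivial
    | h i' m =>
      by_cases h : i = i' <;> simp only [lmul, if_pos, if_neg, h, if_true, if_false] <;> trivial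
    | g i' j n r =>
      by_cases h : i = i'
      · simp only [lmul, if_pos h]
        exact validC_norm A B r i' j _ (canonC_validC A r i' j n hx)
      · simp only [lmul, if_neg h]; trivial
  | g i j hij n =>
    cases x with
    | zero => trivial
    | one => exact hij
    | h j' m =>
      by_cases h : j = j'
      · simp only [lmul, if_pos h]; exact hij
      · simp only [lmul, if_neg h]; trivial
    | g j' l m r =>
      by_cases h : j = j'
      · simp only [lmul, if_pos h]
        refine validC_norm A B _ i j _ ⟨hij, ?_⟩
        subst h
        exact canonC_validC A r j l m hx
      · simp only [lmul, if_neg h]; trivial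

lemma norm_inj (r : List (ι × ℤ)) : ∀ (r' : List (ι × ℤ)) (i j : ι) (n n' c : ℤ),
    CanonC A i j n r → CanonC A i j n' r' →
    normC A B i j (n + c) r = normC A B i j (n' + c) r' → n = n' ∧ r = r' := by
  induction r with
  | nil =>
    intro r' i j n n' c hc hc' he
    cases r' with
    | nil =>
      simp only [normC, Prod.mk.injEq] at he
      exact ⟨by omega, rfl⟩
    | cons p r' =>
      obtain ⟨l, m⟩ := p
      simp only [normC, Prod.mk.injEq] at he
      exact absurd he.2 (by simp)
  | cons p r ih =>
    intro r' i j n n' c hc hc' he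
    obtain ⟨l, m⟩ := p
    cases r' with
    | nil =>
      simp only [normC, Prod.mk.injEq] at he
      exact absurd he.2 (by simp)
    | cons p' r' =>
      obtain ⟨l', m'⟩ := p'
      obtain ⟨hA, hn0, hnA, hcr⟩ := hc
      obtain ⟨-, hn0', hnA', hcr'⟩ := hc'
      simp only [normC, Prod.mk.injEq, List.cons.injEq] at he
      obtain ⟨h1, ⟨h2, h3⟩, h4⟩ := he
      have hApos : (0 : ℤ) < A i j := by exact_mod_cast hA
      have hdvd : (A i j : ℤ) ∣ (n + c) - (n' + c) :=
        Int.dvd_of_emod_eq_zero (Int.emod_eq_emod_iff_emod_sub_eq_zero.mp h1)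
      have hnn' : n = n' := by
        have h5 : (n + c) - (n' + c) = n - n' := by ring
        rw [h5] at hdvd
        have := Int.eq_zero_of_abs_lt_dvd hdvd (by rw [abs_lt]; omega)
        omega
      subst hnn'
      subst h2
      have := ih r' j l m m' ((n + c) / (A i j : ℤ) * B j l) hcr hcr'
        (Prod.ext h3 h4)
      exact ⟨rfl, by rw [this.1, this.2]⟩

lemma lmul_inj (w : Letter ι A) {x y : NF ι} (hx : Canon A x) (hy : Canon A y)
    (he : lmul A B w x = lmul A B w y) (hnz : lmul A B w x ≠ NF.zero) : x = y := by
  cases w with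
  | z => exact absurd rfl hnz
  | h i =>
    cases x with
    | zero => exact absurd rfl hnz
    | one =>
      cases y with
      | zero => rw [he] at hnz; exact absurd rfl hnz
      | one => rfl
      | h i' m =>
        by_cases h2 : i = i'
        · subst h2
          simp only [lmul, eq_self_iff_true, if_true] at he
          rw [NF.h.injEq] at he
          omega
        · simp only [lmul, if_neg h2] at he
          exact absurd he (by simp)
      | g i' j n r =>
        by_cases h2 : i = i'
        · simp only [lmul, h2, eq_self_iff_true, if_true] at he
          exact absurd he (by simp)
        · simp only [lmul, if_neg h2] at he
          exact absurd he (by simp)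
    | h i' m =>
      have hii' : i = i' := by
        by_contra hcon
        simp only [lmul, if_neg hcon] at hnz
        exact absurd rfl hnz
      subst hii'
      simp only [lmul, eq_self_iff_true, if_true] at he hnz
      cases y with
      | zero => rw [he] at hnz; exact absurd rfl hnz
      | one =>
        simp only [lmul] at he
        rw [NF.h.injEq] at he
        omega
      | h i'' m' =>
        by_cases h2 : i = i''
        · subst h2
          simp only [lmul, eq_self_iff_true, if_true] at he
          rw [NF.h.injEq] at he
          obtain ⟨-, h4⟩ := he
          have : m = m' := by omega
          rw [this]
        · simp only [lmul, if_neg h2] at he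
          exact absurd he (by simp)
      | g i'' j n r =>
        by_cases h2 : i = i''
        · simp only [lmul, h2, eq_self_iff_true, if_true] at he
          exact absurd he (by simp)
        · simp only [lmul, if_neg h2] at he
          exact absurd he (by simp)
    | g i' j n r =>
      have hii' : i = i' := by
        by_contra hcon
        simp only [lmul, if_neg hcon] at hnz
        exact absurd rfl hnz
      subst hii'
      simp only [lmul, eq_self_iff_true, if_true] at he hnz
      cases y with
      | zero => rw [he] at hnz; exact absurd rfl hnz
      | one =>
        simp only [lmul] at he
        exact absurd he (by simp)
      | h i'' m' =>
        by_cases h2 : i = i''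
        · simp only [lmul, h2, eq_self_iff_true, if_true] at he
          exact absurd he (by simp)
        · simp only [lmul, if_neg h2] at he
          exact absurd he (by simp)
      | g i'' j' n' r' =>
        by_cases h2 : i = i''
        · subst h2
          simp only [lmul, eq_self_iff_true, if_true] at he
          rw [NF.g.injEq] at he
          obtain ⟨-, hj, h3, h4⟩ := he
          subst hj
          have := norm_inj A B r r' i j n n' (B i j) hx hy (Prod.ext h3 h4)
          rw [this.1, this.2]
        · simp only [lmul, if_neg h2] at he
          exact absurd he (by simp)
  | g i j hij n =>
    have hApos : (0 : ℤ) < A i j := by exact_mod_cast hij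
    cases x with
    | zero => exact absurd rfl hnz
    | one =>
      cases y with
      | zero => rw [he] at hnz; exact absurd rfl hnz
      | one => rfl
      | h j' m =>
        by_cases h2 : j = j'
        · subst h2
          simp only [lmul, eq_self_iff_true, if_true] at he
          rw [NF.g.injEq] at he
          obtain ⟨-, -, h3, -⟩ := he
          have hgt : ((m : ℤ) + 1) * (A i j : ℤ) > 0 := by positivity
          omega
        · simp only [lmul, if_neg h2] at he
          exact absurd he (by simp)
      | g j' l m r =>
        by_cases h2 : j = j'
        · subst h2
          simp only [lmul, eq_self_iff_true, if_true] at he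
          rw [NF.g.injEq] at he
          obtain ⟨-, -, -, h4⟩ := he
          simp only [normC] at h4
          exact absurd h4 (by simp)
        · simp only [lmul, if_neg h2] at he
          exact absurd he (by simp)
    | h j' m =>
      have hjj' : j = j' := by
        by_contra hcon
        simp only [lmul, if_neg hcon] at hnz
        exact absurd rfl hnz
      subst hjj'
      simp only [lmul, eq_self_iff_true, if_true] at he hnz
      cases y with
      | zero => rw [he] at hnz; exact absurd rfl hnz
      | one =>
        simp only [lmul] at he
        rw [NF.g.injEq] at he
        obtain ⟨-, -, h3, -⟩ := he
        have hgt : ((m : ℤ) + 1) * (A i j : ℤ) > 0 := by positivity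
        omega
      | h j'' m' =>
        by_cases h2 : j = j''
        · subst h2
          simp only [lmul, eq_self_iff_true, if_true] at he
          rw [NF.g.injEq] at he
          obtain ⟨-, -, h3, -⟩ := he
          have hA0 : (A i j : ℤ) ≠ 0 := by omega
          have h5 : ((m : ℤ) + 1) * (A i j : ℤ) = ((m' : ℤ) + 1) * (A i j : ℤ) := by omega
          have h6 := mul_right_cancel₀ hA0 h5
          have : m = m' := by omega
          rw [this]
        · simp only [lmul, if_neg h2] at he
          exact absurd he (by simp)
      | g j'' l m' r =>
        by_cases h2 : j = j''
        · subst h2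
          simp only [lmul, eq_self_iff_true, if_true] at he
          rw [NF.g.injEq] at he
          obtain ⟨-, -, -, h4⟩ := he
          simp only [normC] at h4
          exact absurd h4 (by simp)
        · simp only [lmul, if_neg h2] at he
          exact absurd he (by simp)
    | g j' l m r =>
      have hjj' : j = j' := by
        by_contra hcon
        simp only [lmul, if_neg hcon] at hnz
        exact absurd rfl hnz
      subst hjj'
      simp only [lmul, eq_self_iff_true, if_true] at he hnz
      cases y with
      | zero => rw [he] at hnz; exact absurd rfl hnz
      | one =>
        simp only [lmul] at he
        rw [NF.g.injEq] at he
        obtain ⟨-, -, -, h4⟩ := he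
        simp only [normC] at h4
        exact absurd h4 (by simp)
      | h j'' m' =>
        by_cases h2 : j = j''
        · subst h2
          simp only [lmul, eq_self_iff_true, if_true] at he
          rw [NF.g.injEq] at he
          obtain ⟨-, -, -, h4⟩ := he
          simp only [normC] at h4
          exact absurd h4.symm (by simp)
        · simp only [lmul, if_neg h2] at he
          exact absurd he (by simp)
      | g j'' l' m' r' =>
        by_cases h2 : j = j''
        · subst h2
          simp only [lmul, eq_self_iff_true, if_true] at he
          rw [NF.g.injEq] at he
          obtain ⟨-, -, h3, h4⟩ := he
          simp only [normC, List.cons.injEq, Prod.mk.injEq] at h4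
          obtain ⟨⟨hl, hP1⟩, hP2⟩ := h4
          subst hl
          have := norm_inj A B r r' j l m m' ((n / (A i j : ℤ)) * B j l) hx hy
            (Prod.ext hP1 hP2)
          rw [this.1, this.2]
        · simp only [lmul, if_neg h2] at he
          exact absurd he (by simp)

lemma psi_Phi (u : FreeMonoid (Letter ι A)) : ∀ x : NF ι,
    psi A B (Phi A B u x) = KatQ ι A B u * psi A B x := by
  induction u using FreeMonoid.inductionOn' with
  | one =>
    intro x
    show psi A B ((Phi A B 1) x) = KatQ ι A B 1 * psi A B x
    rw [map_one, map_one, one_mul]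
    rfl
  | of_mul a u ih =>
    intro x
    have h1 : Phi A B (FreeMonoid.of a * u) x = lmul A B a (Phi A B u x) := by rw [map_mul]; rfl
    rw [h1, psi_lmul, ih, map_mul, mul_assoc]

lemma Phi_canon (u : FreeMonoid (Letter ι A)) : ∀ x : NF ι,
    Canon A x → Canon A (Phi A B u x) := by
  induction u using FreeMonoid.inductionOn' with
  | one => intro x hx; exact hx
  | of_mul a u ih =>
    intro x hx
    have h1 : Phi A B (FreeMonoid.of a * u) x = lmul A B a (Phi A B u x) := by rw [map_mul]; rfl
    rw [h1]
    exact canon_lmul A B a _ (ih x hx)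

lemma Phi_inj (u : FreeMonoid (Letter ι A)) : ∀ x y : NF ι,
    Canon A x → Canon A y → Phi A B u x = Phi A B u y → Phi A B u x ≠ NF.zero → x = y := by
  induction u using FreeMonoid.inductionOn' with
  | one => intro x y _ _ he _; exact he
  | of_mul a u ih =>
    intro x y hx hy he hnz
    have h1 : Phi A B (FreeMonoid.of a * u) x = lmul A B a (Phi A B u x) := by rw [map_mul]; rfl
    have h2 : Phi A B (FreeMonoid.of a * u) y = lmul A B a (Phi A B u y) := by rw [map_mul]; rfl
    rw [h1, h2] at he
    rw [h1] at hnz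
    have hne : Phi A B u x ≠ NF.zero := by
      intro hz
      exact hnz (by rw [hz, lmul_zero])
    exact ih x y hx hy
      (lmul_inj A B a (Phi_canon A B u x hx) (Phi_canon A B u y hy) he hnz) hne

lemma phi_congr {p q : FreeMonoid (Letter ι A)} (h : KatCon ι A B p q) :
    Phi A B p = Phi A B q :=
  (Con.ker_rel (Phi A B)).mp
    ((Con.conGen_le (c := Con.ker (Phi A B))).mpr (fun _ _ hr => (Con.ker_rel _).mpr (phi_rel A B hr)) h)

end KatAux

/-- Every element of the semigroupoid `Λ_{A,B}` is monic: in `M`, if `a·b = a·c ≠ 0`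
then `b = c`. -/
theorem every_element_monic (ι : Type) [Countable ι] [Nonempty ι]
    (A : ι → ι → ℕ) (B : ι → ι → ℤ)
    (hfin : ∀ i, {j | 1 ≤ A i j}.Finite) (hrow : ∀ i, ∃ j, 1 ≤ A i j)
    (hB0 : ∀ i j, A i j = 0 → B i j = 0) :
    ∀ a b c : KatM ι A B, a * b = a * c → a * b ≠ zeroM ι A B → b = c := by
  letI : DecidableEq ι := Classical.decEq ι
  open KatAux in
  intro a b c hab hnz
  obtain ⟨u, rfl⟩ := Con.mk'_surjective a
  obtain ⟨v, rfl⟩ := Con.mk'_surjective b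
  obtain ⟨w, rfl⟩ := Con.mk'_surjective c
  have hq : ∀ p : FreeMonoid (Letter ι A), (KatCon ι A B).mk' p = KatQ ι A B p := fun _ => rfl
  rw [hq u, hq v, hq w] at *
  rw [← map_mul, ← map_mul] at hab
  have hcon : KatCon ι A B (u * v) (u * w) := (Con.eq _).mp hab
  have hPhi := KatAux.phi_congr A B hcon
  set X := KatAux.Phi A B v KatAux.NF.one with hX
  set Y := KatAux.Phi A B w KatAux.NF.one with hY
  have hXY : KatAux.Phi A B u X = KatAux.Phi A B u Y := by
    have h1 : KatAux.Phi A B (u * v) KatAux.NF.one = KatAux.Phi A B u X := by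
      rw [map_mul]; rfl
    have h2 : KatAux.Phi A B (u * w) KatAux.NF.one = KatAux.Phi A B u Y := by
      rw [map_mul]; rfl
    rw [← h1, ← h2, hPhi]
  have hpsi1 : KatAux.psi A B (KatAux.Phi A B u X)
      = KatQ ι A B (u * v) := by
    have h1 : KatAux.Phi A B (u * v) KatAux.NF.one = KatAux.Phi A B u X := by
      rw [map_mul]; rfl
    rw [← h1, KatAux.psi_Phi]
    show _ * (1 : KatM ι A B) = _
    rw [mul_one]
  have hnz' : KatAux.Phi A B u X ≠ KatAux.NF.zero := by
    intro hz
    apply hnz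
    rw [← map_mul, ← hpsi1, hz]
    rfl
  have hcanX : KatAux.Canon A X := KatAux.Phi_canon A B v KatAux.NF.one trivial
  have hcanY : KatAux.Canon A Y := KatAux.Phi_canon A B w KatAux.NF.one trivial
  have hXY' : X = Y := KatAux.Phi_inj A B u X Y hcanX hcanY hXY hnz'
  have hbv : KatQ ι A B v = KatAux.psi A B X := by
    rw [hX, KatAux.psi_Phi]
    show _ = _ * (1 : KatM ι A B)
    rw [mul_one]
  have hcw : KatQ ι A B w = KatAux.psi A B Y := by
    rw [hY, KatAux.psi_Phi]
    show _ = _ * (1 : KatM ι A B)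
    rw [mul_one]
  rw [hbv, hcw, hXY']
end
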